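/- If the union of all tasks appearing in a list has cardinality at most b, then splits_b on that list with the empty accumulator equals 1, i.e., all tasks fit into a single event. -/
import Mathlib


/-- The `splits` function: greedily pack tasks into events of bandwidth `b`,
counting how many events are needed.  (When the accumulator is empty and a
single task exceeds the bandwidth, the original recursion does not terminate;
the guard `cur ≠ ∅` makes the function total and agrees with the original
definition whenever every task fits into the bandwidth.) -/
def splits {ID : Type*} [DecidableEq ID] (b : ℕ) :
    List (Finset ID) → Finset ID → ℕ
  | [], _ => 1
  | τ :: T, cur =>
    if cur ≠ ∅ ∧ b < (cur ∪ τ).card then 1 + splits b (τ :: T) ∅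
    else splits b T (cur ∪ τ)
termination_by L cur => (L.length, if cur = ∅ then 0 else 1)
decreasing_by
  · simp_all [Prod.lex_iff]
  · simp [Prod.lex_iff]

lemma splits_aux {ID : Type*} [DecidableEq ID] (b : ℕ) (L : List (Finset ID)) :
    ∀ cur : Finset ID, (cur ∪ L.foldr (· ∪ ·) ∅).card ≤ b → splits b L cur = 1 := by
  induction L with
  | nil => intro cur _; simp [splits]
  | cons τ T ih =>
    intro cur h
    rw [splits]
    have hc : (cur ∪ τ).card ≤ b := by
      refine le_trans (Finset.card_le_card ?_) h
      simp only [List.foldr_cons]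
      intro x hx
      simp only [Finset.mem_union] at hx ⊢
      tauto
    rw [if_neg (by push_neg; intro _; omega)]
    apply ih
    refine le_trans (Finset.card_le_card ?_) h
    simp only [List.foldr_cons, Finset.union_assoc, le_refl, Finset.Subset.refl]

/-- If the union of all tasks in the list fits into the bandwidth, all tasks
fit into a single event. -/
theorem splits_eq_one_of_union_card_le {ID : Type*} [DecidableEq ID]
    (b : ℕ) (L : List (Finset ID))
    (hunion : (L.foldr (· ∪ ·) ∅).card ≤ b) :
    splits b L ∅ = 1 := by
  apply splits_aux
  simpa using hunion
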